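/- arXiv:2208.07854 — 4 statements merged into one kernel-verified Lean document; each statement's English description precedes it below -/
import Mathlib

section
/- Let (X,T) be a minimal Cantor system, C a nonempty clopen subset of X, and Q a finite clopen partition of X. Then there exists a Kakutani-Rokhlin partition P of X refining Q whose base equals C. That is, there are nonempty disjoint clopen sets C(1),…,C(I) with union C and positive integers h(1),…,h(I) such that {T^j C(i) : 1 ≤ i ≤ I, 0 ≤ j < h(i)} is a clopen partition of X refining Q. -/
open Set Filter Topology MeasureTheory

/-- A minimal homeomorphism: every two-sided orbit is dense. -/
def IsMinimal {X : Type*} [TopologicalSpace X] (T : X ≃ₜ X) : Prop :=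
  ∀ x : X, Dense (Set.range fun n : ℤ => (T.toEquiv ^ n) x)

/-- First return time of `x` to the set `A` under the map `T`. -/
noncomputable def retTime {X : Type*} (T : X → X) (A : Set X) (x : X) : ℕ :=
  sInf {n : ℕ | 0 < n ∧ T^[n] x ∈ A}

/-- `f` is a `T`-coboundary (with continuous transfer function). -/
def IsCob {X : Type*} [TopologicalSpace X] (T : X → X) (f : X → ℤ) : Prop :=
  ∃ g : X → ℤ, Continuous g ∧ ∀ x, f x = g x - g (T x)

/-- `[f]` is a nonzero positive class in `G(X,T) = C(X,ℤ)/∂_T`. -/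
def PosClass {X : Type*} [TopologicalSpace X] (T : X → X) (f : X → ℤ) : Prop :=
  ∃ u : X → ℤ, Continuous u ∧ (∀ x, 0 ≤ u x) ∧ (∃ x, u x ≠ 0) ∧
    IsCob T (fun x => f x - u x)

/-- The indicator function of a set, with values in `ℤ`. -/
noncomputable def ind {X : Type*} (A : Set X) : X → ℤ := A.indicator fun _ => 1

/-- `[f]` is a nonzero positive class in `G(X,T)/Inf`: `f` is a nonnegative nonzero
continuous function plus a function integrating to zero against every invariant measure. -/
def PosClassInf {X : Type*} [TopologicalSpace X] [MeasurableSpace X]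
    (T : X → X) (f : X → ℤ) : Prop :=
  ∃ u k : X → ℤ, Continuous u ∧ (∀ x, 0 ≤ u x) ∧ (∃ x, u x ≠ 0) ∧ Continuous k ∧
    (∀ μ : Measure X, IsProbabilityMeasure μ → Measure.map T μ = μ →
      ∫ x, (k x : ℝ) ∂μ = 0) ∧
    (∀ x, f x = u x + k x)

/-!
Compactness and minimality give a uniform bound on the return time to `C`. Cutting `C`
according to the first return time `n` of a point and the elements of `Q` it visits at times
`0, …, n - 1` yields finitely many clopen bases. The towers over them are disjoint because
return times are first return times, and they cover `X` because every point is reached from its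
last visit to `C`.
-/

open Function

namespace Homeomorph

variable {X : Type*} [TopologicalSpace X]

def toPermHom : (X ≃ₜ X) →* Equiv.Perm X :=
  MonoidHom.mk' Homeomorph.toEquiv fun _ _ => rfl

theorem toEquiv_zpow (T : X ≃ₜ X) (n : ℤ) : (T ^ n).toEquiv = T.toEquiv ^ n :=
  map_zpow toPermHom T n

theorem coe_pow (T : X ≃ₜ X) (n : ℕ) : ⇑(T ^ n) = (⇑T)^[n] :=
  congrArg DFunLike.coe (map_pow toPermHom T n)

end Homeomorph

section BoundedReturn

variable {X : Type*} [TopologicalSpace X] [CompactSpace X] {T : X ≃ₜ X} {C : Set X}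

theorem IsMinimal.exists_natAbs_le_zpow_mem (hmin : IsMinimal T) (hC : IsOpen C)
    (hCne : C.Nonempty) : ∃ N : ℕ, ∀ x, ∃ n : ℤ, n.natAbs ≤ N ∧ (T ^ n) x ∈ C := by
  obtain ⟨t, ht⟩ := isCompact_univ.elim_finite_subcover (fun n : ℤ => ⇑(T ^ n) ⁻¹' C)
    (fun n => hC.preimage (T ^ n).continuous) fun x _ => by
      obtain ⟨_, ⟨n, rfl⟩, hn⟩ := (hmin x).exists_mem_open hC hCne
      exact mem_iUnion.2 ⟨n, by rwa [mem_preimage, ← Homeomorph.coe_toEquiv,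
        Homeomorph.toEquiv_zpow]⟩
  refine ⟨t.sup Int.natAbs, fun x => ?_⟩
  obtain ⟨n, hn, hx⟩ := mem_iUnion₂.1 (ht (mem_univ x))
  exact ⟨n, Finset.le_sup hn, hx⟩

/-- Shifting the two-sided bound `N` of the previous lemma by `N + 1` makes it one-sided. -/
theorem IsMinimal.exists_bounded_return (hmin : IsMinimal T) (hC : IsOpen C)
    (hCne : C.Nonempty) : ∃ M : ℕ, ∀ x, ∃ n, 0 < n ∧ n ≤ M ∧ (⇑T)^[n] x ∈ C := by
  obtain ⟨N, hN⟩ := hmin.exists_natAbs_le_zpow_mem hC hCne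
  refine ⟨2 * N + 1, fun x => ?_⟩
  obtain ⟨n, hnN, hn⟩ := hN ((T ^ (N + 1)) x)
  refine ⟨(n + (N + 1 : ℕ)).toNat, by omega, by omega, ?_⟩
  rwa [← Homeomorph.coe_pow, ← zpow_natCast, Int.toNat_of_nonneg (by omega), zpow_add,
    zpow_natCast, Homeomorph.mul_apply]

end BoundedReturn

section ReturnTime

variable {X : Type*} {f : X → X} {A : Set X} {x : X}

theorem retTime_pos_and_mem (h : ∃ n, 0 < n ∧ f^[n] x ∈ A) :
    0 < retTime f A x ∧ f^[retTime f A x] x ∈ A :=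
  Nat.sInf_mem h

theorem retTime_le {n : ℕ} (hn : 0 < n) (h : f^[n] x ∈ A) : retTime f A x ≤ n :=
  Nat.sInf_le ⟨hn, h⟩

theorem iterate_notMem_of_lt_retTime {k : ℕ} (hk : 0 < k) (hkr : k < retTime f A x) :
    f^[k] x ∉ A :=
  fun h => Nat.notMem_of_lt_sInf hkr ⟨hk, h⟩

theorem retTime_eq_iff {n : ℕ} (hn : 0 < n) :
    retTime f A x = n ↔ f^[n] x ∈ A ∧ ∀ k, 0 < k → k < n → f^[k] x ∉ A := by
  constructor
  · rintro rfl
    exact ⟨(Nat.sInf_mem (Nat.nonempty_of_pos_sInf hn)).2,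
      fun k hk hkn => iterate_notMem_of_lt_retTime hk hkn⟩
  · rintro ⟨hmem, hfirst⟩
    refine (retTime_le hn hmem).antisymm (not_lt.1 fun hlt => ?_)
    obtain ⟨hpos, hret⟩ := retTime_pos_and_mem ⟨n, hn, hmem⟩
    exact hfirst _ hpos hlt hret

theorem isClopen_setOf_retTime_eq [TopologicalSpace X] (hf : Continuous f) (hA : IsClopen A)
    {n : ℕ} (hn : 0 < n) : IsClopen {x | retTime f A x = n} := by
  have : {x | retTime f A x = n} = f^[n] ⁻¹' A ∩ ⋂ k ∈ Finset.Ioo 0 n, f^[k] ⁻¹' Aᶜ := by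
    ext x
    simp [retTime_eq_iff hn, and_imp]
  rw [this]
  exact (hA.preimage (hf.iterate n)).inter
    (isClopen_biInter_finset fun k _ => hA.compl.preimage (hf.iterate k))

theorem eq_of_iterate_eq_of_lt_retTime (hf : Injective f) {y : X} {j j' : ℕ} (hx : x ∈ A)
    (hy : y ∈ A) (hj : j < retTime f A x) (hj' : j' < retTime f A y)
    (h : f^[j] x = f^[j'] y) : j = j' ∧ x = y := by
  wlog hle : j ≤ j' generalizing x y j j'
  · obtain ⟨hjj, hxy⟩ := this hy hx hj' hj h.symm (by omega)
    exact ⟨hjj.symm, hxy.symm⟩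
  have hxy : x = f^[j' - j] y :=
    hf.iterate j (by rw [h, ← iterate_add_apply, Nat.add_sub_cancel' hle])
  obtain hjj | hpos := Nat.eq_zero_or_pos (j' - j)
  · exact ⟨by omega, by rwa [hjj, iterate_zero_apply] at hxy⟩
  · exact absurd (hxy ▸ hx) (iterate_notMem_of_lt_retTime hpos (by omega))

/-- Go back to the last visit of the backward orbit of `x` to `A`. -/
theorem exists_iterate_eq_of_lt_retTime (hf : Surjective f) {M : ℕ}
    (hM : ∀ y, ∃ n, 0 < n ∧ n ≤ M ∧ f^[n] y ∈ A) (x : X) :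
    ∃ b ∈ A, ∃ j < retTime f A b, f^[j] b = x := by
  classical
  have hx : ∃ k, ∃ b ∈ A, f^[k] b = x := by
    obtain ⟨y, rfl⟩ := hf.iterate M x
    obtain ⟨n, -, hnM, hn⟩ := hM y
    exact ⟨M - n, _, hn, by rw [← iterate_add_apply, Nat.sub_add_cancel hnM]⟩
  obtain ⟨b, hb, hbx⟩ := Nat.find_spec hx
  refine ⟨b, hb, Nat.find hx, not_le.1 fun hle => ?_, hbx⟩
  obtain ⟨n, hn, -, hbn⟩ := hM b
  obtain ⟨hpos, hret⟩ := retTime_pos_and_mem ⟨n, hn, hbn⟩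
  refine Nat.find_min hx (Nat.sub_lt (hpos.trans_le hle) hpos) ⟨_, hret, ?_⟩
  rw [← iterate_add_apply, Nat.sub_add_cancel hle, hbx]

end ReturnTime

section TowerBase

variable {X : Type*} {f : X → X} {A : Set X} {Q : Finset (Set X)}

def towerBase (f : X → X) (A : Set X) (Q : Finset (Set X)) (n : ℕ) (σ : Fin n → Q) : Set X :=
  A ∩ {x | retTime f A x = n} ∩ ⋂ j : Fin n, f^[j] ⁻¹' (σ j : Set X)

theorem isClopen_towerBase [TopologicalSpace X] (hf : Continuous f) (hA : IsClopen A)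
    (hQ : ∀ q ∈ Q, IsClopen q) {n : ℕ} (hn : 0 < n) (σ : Fin n → Q) :
    IsClopen (towerBase f A Q n σ) :=
  (hA.inter (isClopen_setOf_retTime_eq hf hA hn)).inter
    (isClopen_iInter_of_finite fun j => (hQ _ (σ j).2).preimage (hf.iterate j))

theorem exists_mem_towerBase {M : ℕ} (hM : ∀ y, ∃ n, 0 < n ∧ n ≤ M ∧ f^[n] y ∈ A)
    (hQ : ⋃₀ (Q : Set (Set X)) = univ) {x : X} (hx : x ∈ A) :
    ∃ p : Σ n : Fin (M + 1), (Fin n → Q), x ∈ towerBase f A Q p.1 p.2 := by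
  obtain ⟨n, hn, hnM, hxn⟩ := hM x
  have hQmem (y : X) : ∃ q : Q, y ∈ (q : Set X) := by
    obtain ⟨q, hq, hy⟩ := mem_sUnion.1 (hQ ▸ mem_univ y)
    exact ⟨⟨q, hq⟩, hy⟩
  choose σ hσ using fun j : Fin (retTime f A x) => hQmem (f^[j] x)
  have hr : retTime f A x < M + 1 := Nat.lt_succ_of_le ((retTime_le hn hxn).trans hnM)
  exact ⟨⟨⟨retTime f A x, hr⟩, σ⟩, ⟨hx, rfl⟩, mem_iInter.2 hσ⟩

theorem eq_of_mem_towerBase (hQ : (Q : Set (Set X)).PairwiseDisjoint id) {M : ℕ}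
    {p p' : Σ n : Fin (M + 1), (Fin n → Q)} {x : X} (hx : x ∈ towerBase f A Q p.1 p.2)
    (hx' : x ∈ towerBase f A Q p'.1 p'.2) : p = p' := by
  obtain ⟨⟨n, hn⟩, σ⟩ := p
  obtain ⟨⟨n', hn'⟩, σ'⟩ := p'
  obtain rfl : n = n' := hx.1.2.symm.trans hx'.1.2
  obtain rfl : σ = σ' := funext fun j => Subtype.ext <| hQ.elim (σ j).2 (σ' j).2 <|
    not_disjoint_iff.2 ⟨_, mem_iInter.1 hx.2 j, mem_iInter.1 hx'.2 j⟩
  rfl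

end TowerBase

structure IsKRPartition {X ι : Type*} [TopologicalSpace X] (f : X → X) (A : Set X)
    (Q : Finset (Set X)) (B : ι → Set X) (h : ι → ℕ) : Prop where
  isClopen : ∀ i, IsClopen (B i)
  nonempty : ∀ i, (B i).Nonempty
  height_pos : ∀ i, 0 < h i
  iUnion_eq : ⋃ i, B i = A
  disjoint : ∀ i i' j j', j < h i → j' < h i' → (i, j) ≠ (i', j') →
    Disjoint (f^[j] '' B i) (f^[j'] '' B i')
  iUnion_iterate : ⋃ i, ⋃ (j : ℕ) (_ : j < h i), f^[j] '' B i = univ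
  subordinate : ∀ i j, j < h i → ∃ q ∈ Q, f^[j] '' B i ⊆ q

namespace IsKRPartition

variable {X ι ι' : Type*} [TopologicalSpace X] {f : X → X} {A : Set X} {Q : Finset (Set X)}
  {B : ι → Set X} {h : ι → ℕ}

theorem comp_equiv (hKR : IsKRPartition f A Q B h) (e : ι' ≃ ι) :
    IsKRPartition f A Q (B ∘ e) (h ∘ e) where
  isClopen i := hKR.isClopen (e i)
  nonempty i := hKR.nonempty (e i)
  height_pos i := hKR.height_pos (e i)
  iUnion_eq := (e.surjective.iUnion_comp B).trans hKR.iUnion_eq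
  disjoint i i' j j' hj hj' hne := hKR.disjoint (e i) (e i') j j' hj hj' fun heq =>
    hne (Prod.ext (e.injective (Prod.ext_iff.1 heq).1) (Prod.ext_iff.1 heq).2)
  iUnion_iterate :=
    (e.surjective.iUnion_comp fun i => ⋃ (j : ℕ) (_ : j < h i), f^[j] '' B i).trans
      hKR.iUnion_iterate
  subordinate i := hKR.subordinate (e i)

end IsKRPartition

section Construction

variable {X : Type*} [TopologicalSpace X] {f : X → X} {A : Set X} {Q : Finset (Set X)} {M : ℕ}

theorem isKRPartition_towerBase (hf : Continuous f) (hbij : Bijective f) (hA : IsClopen A)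
    (hM : ∀ y, ∃ n, 0 < n ∧ n ≤ M ∧ f^[n] y ∈ A) (hQclopen : ∀ q ∈ Q, IsClopen q)
    (hQcover : ⋃₀ (Q : Set (Set X)) = univ) (hQdisj : (Q : Set (Set X)).PairwiseDisjoint id) :
    IsKRPartition f A Q
      (fun p : {p : Σ n : Fin (M + 1), (Fin n → Q) // (towerBase f A Q p.1 p.2).Nonempty} =>
        towerBase f A Q p.1.1 p.1.2)
      (fun p => p.1.1) := by
  have height_pos (p : Σ n : Fin (M + 1), (Fin n → Q)) (hp : (towerBase f A Q p.1 p.2).Nonempty) :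
      0 < (p.1 : ℕ) := by
    obtain ⟨x, hx⟩ := hp
    obtain ⟨n, hn, -, hxn⟩ := hM x
    exact hx.1.2 ▸ (retTime_pos_and_mem ⟨n, hn, hxn⟩).1
  have mem_iUnion_of_mem {x : X} (hx : x ∈ A) :
      ∃ p : {p : Σ n : Fin (M + 1), (Fin n → Q) // (towerBase f A Q p.1 p.2).Nonempty},
        x ∈ towerBase f A Q p.1.1 p.1.2 := by
    obtain ⟨p, hp⟩ := exists_mem_towerBase hM hQcover hx
    exact ⟨⟨p, x, hp⟩, hp⟩
  refine ⟨fun p => isClopen_towerBase hf hA hQclopen (height_pos p.1 p.2) _, fun p => p.2,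
    fun p => height_pos p.1 p.2, ?_, ?_, ?_, ?_⟩
  · refine subset_antisymm (iUnion_subset fun p x hx => hx.1.1) fun x hx => ?_
    exact mem_iUnion.2 (mem_iUnion_of_mem hx)
  · rintro p p' j j' hj hj' hne
    refine disjoint_left.2 ?_
    rintro _ ⟨b, hb, rfl⟩ ⟨b', hb', hbb'⟩
    obtain ⟨rfl, rfl⟩ := eq_of_iterate_eq_of_lt_retTime hbij.1 hb'.1.1 hb.1.1
      (hb'.1.2 ▸ hj') (hb.1.2 ▸ hj) hbb'
    exact hne (by rw [Subtype.ext (eq_of_mem_towerBase hQdisj hb hb')])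
  · refine eq_univ_of_forall fun x => ?_
    obtain ⟨b, hb, j, hj, rfl⟩ := exists_iterate_eq_of_lt_retTime hbij.2 hM x
    obtain ⟨p, hp⟩ := mem_iUnion_of_mem hb
    exact mem_iUnion.2 ⟨p, mem_iUnion₂.2 ⟨j, hp.1.2 ▸ hj, b, hp, rfl⟩⟩
  · exact fun p j hj => ⟨_, (p.1.2 ⟨j, hj⟩).2,
      image_subset_iff.2 fun b hb => mem_iInter.1 hb.2 ⟨j, hj⟩⟩

theorem exists_isKRPartition_fin (hf : Continuous f) (hbij : Bijective f) (hA : IsClopen A)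
    (hM : ∀ y, ∃ n, 0 < n ∧ n ≤ M ∧ f^[n] y ∈ A) (hQclopen : ∀ q ∈ Q, IsClopen q)
    (hQcover : ⋃₀ (Q : Set (Set X)) = univ) (hQdisj : (Q : Set (Set X)).PairwiseDisjoint id) :
    ∃ (I : ℕ) (B : Fin I → Set X) (h : Fin I → ℕ), IsKRPartition f A Q B h :=
  ⟨_, _, _, (isKRPartition_towerBase hf hbij hA hM hQclopen hQcover hQdisj).comp_equiv
    (Finite.equivFin _).symm⟩

end Construction

theorem stmt3_general {X : Type*} [MetricSpace X] [CompactSpace X]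
    (T : X ≃ₜ X) (hmin : IsMinimal T)
    (C : Set X) (hC : IsClopen C) (hCne : C.Nonempty)
    (Q : Finset (Set X)) (hQclopen : ∀ q ∈ Q, IsClopen q)
    (hQcover : ⋃₀ (Q : Set (Set X)) = Set.univ)
    (hQdisj : (Q : Set (Set X)).PairwiseDisjoint id) :
    ∃ (I : ℕ) (B : Fin I → Set X) (h : Fin I → ℕ),
      (∀ i, IsClopen (B i) ∧ (B i).Nonempty ∧ 0 < h i) ∧
      (⋃ i, B i) = C ∧
      (∀ i i' : Fin I, ∀ j j' : ℕ, j < h i → j' < h i' → (i, j) ≠ (i', j') →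
        Disjoint ((⇑T)^[j] '' B i) ((⇑T)^[j'] '' B i')) ∧
      (⋃ (i : Fin I), ⋃ (j : ℕ) (_ : j < h i), (⇑T)^[j] '' B i) = Set.univ ∧
      (∀ i : Fin I, ∀ j : ℕ, j < h i → ∃ q ∈ Q, (⇑T)^[j] '' B i ⊆ q) := by
  obtain ⟨M, hM⟩ := hmin.exists_bounded_return hC.isOpen hCne
  obtain ⟨I, B, h, hKR⟩ := exists_isKRPartition_fin T.continuous T.bijective hC hM hQclopen
    hQcover hQdisj
  exact ⟨I, B, h, fun i => ⟨hKR.isClopen i, hKR.nonempty i, hKR.height_pos i⟩, hKR.iUnion_eq,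
    hKR.disjoint, hKR.iUnion_iterate, hKR.subordinate⟩

theorem stmt3 {X : Type*} [MetricSpace X] [CompactSpace X] [PerfectSpace X]
    [TotallyDisconnectedSpace X]
    (T : X ≃ₜ X) (hmin : IsMinimal T)
    (C : Set X) (hC : IsClopen C) (hCne : C.Nonempty)
    (Q : Finset (Set X)) (hQclopen : ∀ q ∈ Q, IsClopen q)
    (hQcover : ⋃₀ (Q : Set (Set X)) = Set.univ)
    (hQdisj : (Q : Set (Set X)).PairwiseDisjoint id) :
    ∃ (I : ℕ) (B : Fin I → Set X) (h : Fin I → ℕ),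
      (∀ i, IsClopen (B i) ∧ (B i).Nonempty ∧ 0 < h i) ∧
      (⋃ i, B i) = C ∧
      (∀ i i' : Fin I, ∀ j j' : ℕ, j < h i → j' < h i' → (i, j) ≠ (i', j') →
        Disjoint ((⇑T)^[j] '' B i) ((⇑T)^[j'] '' B i')) ∧
      (⋃ (i : Fin I), ⋃ (j : ℕ) (_ : j < h i), (⇑T)^[j] '' B i) = Set.univ ∧
      (∀ i : Fin I, ∀ j : ℕ, j < h i → ∃ q ∈ Q, (⇑T)^[j] '' B i ⊆ q) :=
  stmt3_general T hmin C hC hCne Q hQclopen hQcover hQdisj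
end

section
/- Let (X,T) be a minimal Cantor system and f ∈ C(X,ℤ). Then the class [f] is strictly positive in G(X,T) (i.e., f equals a nonnegative nonzero continuous integer function plus a coboundary) if and only if there is a nonempty clopen set A ⊆ X such that for all x ∈ A, Σ_{j=0}^{r_A(x)-1} f(T^j x) > 0. -/
open Set Filter Topology MeasureTheory

/-!
If `f = u + g - g ∘ T` with `u ≥ 0`, `u x₁ > 0` and `g` continuous, take for `A` the clopen set
where `u` and `g` agree with their values at `x₁`: along a return to `A` the coboundary part
telescopes to `g x - g (T^r x) = 0`, leaving a sum of values of `u` that includes `u x > 0`.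
Conversely, given `A`, let `u` be the return-time Birkhoff sum of `f` on `A` and `0` off `A`;
then `f - u = g - g ∘ T`, where `g y` sums `f` along the orbit of `y` until it first enters `A`.
By minimality and compactness every point enters `A` at some positive time, and since `A` is
clopen the entrance time, hence `g`, is locally constant.
-/

open Function

section Iterates

variable {X : Type*} [TopologicalSpace X]

theorem Homeomorph.continuous_toEquiv_zpow (T : X ≃ₜ X) (n : ℤ) :
    Continuous ⇑(T.toEquiv ^ n) := by
  induction n using Int.induction_on with
  | zero => exact continuous_id
  | succ n ih => rw [zpow_add_one, Equiv.Perm.coe_mul]; exact ih.comp T.continuous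
  | pred n ih => rw [zpow_sub_one, Equiv.Perm.coe_mul]; exact ih.comp T.symm.continuous

theorem Homeomorph.toEquiv_zpow_natCast_apply (T : X ≃ₜ X) (n : ℕ) (x : X) :
    (T.toEquiv ^ (n : ℤ)) x = T^[n] x := by
  rw [zpow_natCast, ← Equiv.Perm.iterate_eq_pow]
  rfl

theorem IsMinimal.exists_pos_iterate_mem [CompactSpace X] {T : X ≃ₜ X} (hT : IsMinimal T)
    {A : Set X} (hA : IsOpen A) (hAne : A.Nonempty) (x : X) :
    ∃ n, 0 < n ∧ T^[n] x ∈ A := by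
  have hcover : (univ : Set X) ⊆ ⋃ n : ℤ, ⇑(T.toEquiv ^ n) ⁻¹' A := fun y _ => by
    obtain ⟨_, ⟨n, rfl⟩, hn⟩ := (hT y).exists_mem_open hA hAne
    exact mem_iUnion.2 ⟨n, hn⟩
  obtain ⟨t, ht⟩ := isCompact_univ.elim_finite_subcover _
    (fun n => hA.preimage (T.continuous_toEquiv_zpow n)) hcover
  -- all times in `t` are `≥ m`, so starting `1 - m` steps ahead makes the hitting time positive
  obtain ⟨m, hm⟩ := t.bddBelow
  obtain ⟨n, hnt, hn⟩ := mem_iUnion₂.1 (ht (mem_univ ((T.toEquiv ^ (1 - m)) x)))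
  have hmn : m ≤ n := hm (Finset.mem_coe.2 hnt)
  refine ⟨(n + (1 - m)).toNat, by omega, ?_⟩
  rw [← T.toEquiv_zpow_natCast_apply, Int.toNat_of_nonneg (by omega), zpow_add,
    Equiv.Perm.mul_apply]
  exact hn

end Iterates

section HittingTime

variable {X : Type*}

noncomputable def hitTime (T : X → X) (A : Set X) (y : X) : ℕ :=
  sInf {n : ℕ | T^[n] y ∈ A}

theorem retTime_spec {T : X → X} {A : Set X} {x : X} (h : ∃ n, 0 < n ∧ T^[n] x ∈ A) :
    0 < retTime T A x ∧ T^[retTime T A x] x ∈ A :=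
  Nat.sInf_mem h

theorem retTime_eq_hitTime_add_one {T : X → X} {A : Set X} {x : X}
    (h : ∃ n, 0 < n ∧ T^[n] x ∈ A) : retTime T A x = hitTime T A (T x) + 1 := by
  have hpos : 1 ≤ retTime T A x := (retTime_spec h).1
  rw [retTime, ← Nat.sInf_add hpos, hitTime]
  simp only [Nat.add_pos_right, Nat.lt_add_one, true_and, iterate_succ_apply]

theorem hitTime_of_mem {T : X → X} {A : Set X} {y : X} (hy : y ∈ A) : hitTime T A y = 0 :=
  Nat.sInf_eq_zero.2 (Or.inl hy)

theorem hitTime_of_notMem {T : X → X} {A : Set X} {y : X} (hy : y ∉ A) :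
    hitTime T A y = retTime T A y := by
  refine congrArg sInf (ext fun n => ⟨fun hn => ⟨Nat.pos_of_ne_zero ?_, hn⟩, And.right⟩)
  rintro rfl
  exact hy hn

theorem hitTime_eq_iff {T : X → X} {A : Set X} {y : X} (h : ∃ n, T^[n] y ∈ A) (n : ℕ) :
    hitTime T A y = n ↔ T^[n] y ∈ A ∧ ∀ k < n, T^[k] y ∉ A := by
  classical
  rw [hitTime, Nat.sInf_def (s := {n | T^[n] y ∈ A}) h, Nat.find_eq_iff]
  rfl

theorem isLocallyConstant_hitTime [TopologicalSpace X] {T : X → X} (hT : Continuous T)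
    {A : Set X} (hA : IsClopen A) (h : ∀ y, ∃ n, T^[n] y ∈ A) :
    IsLocallyConstant (hitTime T A) := by
  refine IsLocallyConstant.iff_isOpen_fiber.2 fun n => ?_
  have hfiber :
      hitTime T A ⁻¹' {n} = T^[n] ⁻¹' A ∩ ⋂ k ∈ Finset.range n, T^[k] ⁻¹' Aᶜ := by
    ext y
    simp [hitTime_eq_iff (h y)]
  rw [hfiber]
  exact (hA.isOpen.preimage (hT.iterate n)).inter
    (isOpen_biInter_finset fun k _ => hA.compl.isOpen.preimage (hT.iterate k))

end HittingTime

section Birkhoff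

variable {X : Type*}

theorem birkhoffSum_coboundary {G : Type*} [AddCommGroup G] (T : X → X) (g : X → G) (n : ℕ)
    (x : X) : birkhoffSum T (fun y => g y - g (T y)) n x = g x - g (T^[n] x) := by
  simp only [birkhoffSum, ← iterate_succ_apply' T]
  exact Finset.sum_range_sub' _ n

theorem continuous_birkhoffSum [TopologicalSpace X] {T : X → X} (hT : Continuous T)
    {f : X → ℤ} (hf : Continuous f) (n : ℕ) : Continuous (birkhoffSum T f n) :=
  continuous_finsetSum _ fun k _ => hf.comp (hT.iterate k)

theorem IsLocallyConstant.continuous_apply_apply {Y ι : Type*} [TopologicalSpace X]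
    [TopologicalSpace Y] {τ : X → ι} (hτ : IsLocallyConstant τ) {F : ι → X → Y}
    (hF : ∀ i, Continuous (F i)) : Continuous fun x => F (τ x) x :=
  continuous_iff_continuousAt.2 fun x => (hF (τ x)).continuousAt.congr <| by
    filter_upwards [hτ.eventually_eq x] with y hy
    rw [hy]

noncomputable def hitSum (T : X → X) (A : Set X) (f : X → ℤ) (y : X) : ℤ :=
  birkhoffSum T f (hitTime T A y) y

theorem hitSum_sub_hitSum_apply {T : X → X} {A : Set X} (f : X → ℤ)
    (h : ∀ y, ∃ n, 0 < n ∧ T^[n] y ∈ A) (y : X) :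
    hitSum T A f y - hitSum T A f (T y) =
      f y - A.indicator (fun x => birkhoffSum T f (retTime T A x) x) y := by
  have hret : birkhoffSum T f (retTime T A y) y = f y + hitSum T A f (T y) := by
    rw [retTime_eq_hitTime_add_one (h y), birkhoffSum_succ']
    rfl
  by_cases hy : y ∈ A
  · rw [indicator_of_mem hy, hret, hitSum, hitTime_of_mem hy, birkhoffSum_zero]
    ring
  · rw [indicator_of_notMem hy, hitSum, hitTime_of_notMem hy, hret]
    ring

theorem continuous_hitSum [TopologicalSpace X] {T : X → X} (hT : Continuous T) {A : Set X}
    (hA : IsClopen A) (h : ∀ y, ∃ n, T^[n] y ∈ A) {f : X → ℤ} (hf : Continuous f) :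
    Continuous (hitSum T A f) :=
  (isLocallyConstant_hitTime hT hA h).continuous_apply_apply (continuous_birkhoffSum hT hf)

end Birkhoff

section PositiveClasses

variable {X : Type*} [TopologicalSpace X] [CompactSpace X]

theorem exists_isClopen_birkhoffSum_retTime_pos {T : X ≃ₜ X} (hT : IsMinimal T) {f : X → ℤ}
    (hpos : PosClass T f) :
    ∃ A : Set X, IsClopen A ∧ A.Nonempty ∧
      ∀ x ∈ A, 0 < birkhoffSum T f (retTime T A x) x := by
  obtain ⟨u, hu, hu0, ⟨x₁, hx₁⟩, g, hg, hcob⟩ := hpos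
  have hf : f = u + fun y => g y - g (T y) := funext fun y => eq_add_of_sub_eq' (hcob y)
  set A := u ⁻¹' {u x₁} ∩ g ⁻¹' {g x₁}
  have hA : IsClopen A :=
    ((isClopen_discrete _).preimage hu).inter ((isClopen_discrete _).preimage hg)
  refine ⟨A, hA, ⟨x₁, rfl, rfl⟩, fun x hx => ?_⟩
  obtain ⟨hr, hrA⟩ := retTime_spec (hT.exists_pos_iterate_mem hA.isOpen ⟨x₁, rfl, rfl⟩ x)
  have hux : 0 < u x := by
    rw [hx.1]
    exact (hu0 x₁).lt_of_ne' hx₁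
  calc 0 < u x := hux
    _ ≤ birkhoffSum T u (retTime T A x) x :=
        Finset.single_le_sum (fun k _ => hu0 _) (Finset.mem_range.2 hr)
    _ = birkhoffSum T f (retTime T A x) x := by
        rw [hf, birkhoffSum_add', birkhoffSum_coboundary, hx.2, hrA.2, sub_self, add_zero]

theorem posClass_of_birkhoffSum_retTime_pos {T : X ≃ₜ X} (hT : IsMinimal T) {f : X → ℤ}
    (hf : Continuous f) {A : Set X} (hA : IsClopen A) (hAne : A.Nonempty)
    (hpos : ∀ x ∈ A, 0 < birkhoffSum T f (retTime T A x) x) : PosClass T f := by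
  have hret := hT.exists_pos_iterate_mem hA.isOpen hAne
  have hcob := hitSum_sub_hitSum_apply f hret
  have hg : Continuous (hitSum T A f) :=
    continuous_hitSum T.continuous hA (fun y => (hret y).imp fun _ => And.right) hf
  have hu : A.indicator (fun x => birkhoffSum T f (retTime T A x) x) =
      fun y => f y - (hitSum T A f y - hitSum T A f (T y)) := by
    funext y
    rw [hcob]
    ring
  obtain ⟨a, ha⟩ := hAne
  refine ⟨_, ?_, indicator_nonneg fun x hx => (hpos x hx).le, ⟨a, ?_⟩, hitSum T A f, hg,
    fun y => (hcob y).symm⟩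
  · rw [hu]
    exact hf.sub (hg.sub (hg.comp T.continuous))
  · rw [indicator_of_mem ha]
    exact (hpos a ha).ne'

end PositiveClasses

theorem stmt5_general {X : Type*} [MetricSpace X] [CompactSpace X]
    (T : X ≃ₜ X) (hmin : IsMinimal T)
    (f : X → ℤ) (hf : Continuous f) :
    PosClass (⇑T) f ↔
      ∃ A : Set X, IsClopen A ∧ A.Nonempty ∧
        ∀ x ∈ A, 0 < ∑ j ∈ Finset.range (retTime (⇑T) A x), f ((⇑T)^[j] x) :=
  ⟨exists_isClopen_birkhoffSum_retTime_pos hmin,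
    fun ⟨_, hA, hAne, hpos⟩ => posClass_of_birkhoffSum_retTime_pos hmin hf hA hAne hpos⟩

theorem stmt5 {X : Type*} [MetricSpace X] [CompactSpace X] [PerfectSpace X]
    [TotallyDisconnectedSpace X]
    (T : X ≃ₜ X) (hmin : IsMinimal T)
    (f : X → ℤ) (hf : Continuous f) :
    PosClass (⇑T) f ↔
      ∃ A : Set X, IsClopen A ∧ A.Nonempty ∧
        ∀ x ∈ A, 0 < ∑ j ∈ Finset.range (retTime (⇑T) A x), f ((⇑T)^[j] x) :=
  stmt5_general T hmin f hf
end

section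
/- Let (X,T) be a minimal Cantor system, and let A, B be nonempty disjoint clopen subsets of X with 𝟙_A − 𝟙_B ∈ ∂_T (a T-coboundary). Then there exists a continuous function p : A → ℤ⁺ such that x ↦ T^{p(x)}(x) is a homeomorphism from A onto B. -/
open Set Filter Topology MeasureTheory

/-!
Write `𝟙_A - 𝟙_B = g - g ∘ T` with `g` continuous and read an orbit as a word in brackets, the
points of `A` opening and those of `B` closing, so that `-g` is the nesting depth. A minimal
homeomorphism of a compact space is recurrent, so the depth returns to its value at `x ∈ A`, and
the bracket opened at `x` is closed at some `T^[p x] x ∈ B`. The time `p` is locally constant,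
being determined by finitely many values of the locally constant functions `g ∘ T^[k]`. Reading
the orbit backwards (under `T⁻¹`, with `B` opening and `A` closing) matches each closing bracket
with its opening one, which gives the inverse map.
-/

open Function

section Recurrence

variable {X : Type*} [TopologicalSpace X] {T : X ≃ₜ X}

theorem IsMinimal.symm (hmin : IsMinimal T) : IsMinimal T.symm := by
  intro x
  have hpow : ∀ n : ℤ, T.symm.toEquiv ^ n = T.toEquiv ^ (-n) := fun n => inv_zpow' T.toEquiv n
  have hrange : (range fun n : ℤ => (T.symm.toEquiv ^ n) x) =
      range fun n : ℤ => (T.toEquiv ^ n) x := by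
    simp_rw [hpow]
    exact neg_surjective.range_comp fun n => (T.toEquiv ^ n) x
  rw [hrange]
  exact hmin x

theorem Homeomorph.pow_apply (T : X ≃ₜ X) (n : ℕ) (x : X) : (T ^ n) x = T^[n] x := by
  induction n generalizing x with
  | zero => rfl
  | succ n ih => rw [pow_succ, Homeomorph.mul_apply, ih, iterate_succ_apply]

theorem Homeomorph.toEquiv_zpow_s12 (T : X ≃ₜ X) (n : ℤ) : (T ^ n).toEquiv = T.toEquiv ^ n :=
  map_zpow ({ toFun := toEquiv, map_one' := rfl, map_mul' := fun _ _ => rfl } :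
    (X ≃ₜ X) →* Equiv.Perm X) T n

/-- The `ω`-limit set of `x` is nonempty, closed and invariant under all powers of `T`, hence
contains a dense orbit and is everything. -/
theorem IsMinimal.mem_closure_range_iterate_succ [CompactSpace X] (hmin : IsMinimal T) (x : X) :
    x ∈ closure (range fun n : ℕ => T^[n + 1] x) := by
  set ϕ : ℤ → X → X := fun n y => (T ^ n) y
  have hinv : ∀ t, MapsTo (ϕ t) (omegaLimit atTop ϕ {x}) (omegaLimit atTop ϕ {x}) := fun t =>
    (mapsTo_omegaLimit _ (mapsTo_id _) (fun t' y => by simp [ϕ, zpow_add])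
      (T ^ t).continuous).mono_right
      (omegaLimit_subset_of_tendsto ϕ {x} (tendsto_atTop_add_const_left _ t tendsto_id))
  obtain ⟨z, hz⟩ := nonempty_omegaLimit atTop ϕ {x} (singleton_nonempty x)
  have huniv : omegaLimit atTop ϕ {x} = univ := by
    refine eq_univ_of_univ_subset ?_
    have hdense := hmin z
    simp_rw [← Homeomorph.toEquiv_zpow_s12, Homeomorph.coe_toEquiv] at hdense
    rw [← hdense.closure_eq]
    exact closure_minimal (range_subset_iff.2 fun n => hinv n hz) (isClosed_omegaLimit _ _ _)
  have hx : x ∈ closure (image2 ϕ (Ioi 0) {x}) :=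
    omegaLimit_subset_closure_image2 _ _ _ (Ioi_mem_atTop 0) (huniv ▸ mem_univ x)
  refine closure_mono ?_ hx
  rintro _ ⟨n, hn, _, rfl, rfl⟩
  lift n to ℕ using (mem_Ioi.1 hn).le
  obtain ⟨m, rfl⟩ := Nat.exists_eq_add_one_of_ne_zero (Nat.cast_pos.1 (mem_Ioi.1 hn)).ne'
  exact ⟨m, (T.pow_apply _ _).symm⟩

end Recurrence

theorem continuous_iterate_apply {X Y : Type*} [TopologicalSpace X] [TopologicalSpace Y]
    {T : X → X} (hT : Continuous T) {p : Y → ℕ} (hp : Continuous p) {f : Y → X}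
    (hf : Continuous f) : Continuous fun y => T^[p y] (f y) := by
  refine continuous_iff_continuousAt.2 fun y => ?_
  refine ((hT.iterate (p y)).comp hf).continuousAt.congr ?_
  filter_upwards [(IsLocallyConstant.iff_continuous p).2 hp |>.eventually_eq y] with z hz
  rw [comp_apply, hz]

theorem Homeomorph.iterate_symm_iterate_of_le {X : Type*} [TopologicalSpace X] (T : X ≃ₜ X)
    {k n : ℕ} (h : k ≤ n) (x : X) : T.symm^[k] (T^[n] x) = T^[n - k] x := by
  obtain ⟨m, rfl⟩ := Nat.exists_eq_add_of_le h
  rw [Nat.add_sub_cancel_left, iterate_add_apply, LeftInverse.iterate T.symm_apply_apply]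

section Matching

variable {X : Type*}

/-- The bracket opened at `x` is closed at `T^[n] x`: the depth `-g` stays above its value at
`x` until it returns to it at time `n + 1`. -/
def IsMatchTime (T : X → X) (g : X → ℤ) (x : X) (n : ℕ) : Prop :=
  0 < n ∧ (∀ k, 0 < k → k ≤ n → g (T^[k] x) < g x) ∧ g (T^[n + 1] x) = g x

theorem IsMatchTime.unique {T : X → X} {g : X → ℤ} {x : X} {m n : ℕ}
    (hm : IsMatchTime T g x m) (hn : IsMatchTime T g x n) : m = n := by
  by_contra hne
  wlog hlt : m < n generalizing m n
  · exact this hn hm (Ne.symm hne) (by omega)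
  exact (hn.2.1 (m + 1) m.succ_pos hlt).ne hm.2.2

section Cocycle

variable {T : X → X} {g : X → ℤ} {A B : Set X}

theorem apply_le_add_one_of_sub_eq_ind (hg : ∀ x, g x - g (T x) = ind A x - ind B x) (x : X) :
    g (T x) ≤ g x + 1 := by
  classical
  have := hg x
  simp only [ind, Set.indicator_apply] at this
  split_ifs at this <;> omega

theorem mem_of_apply_lt_of_sub_eq_ind (hg : ∀ x, g x - g (T x) = ind A x - ind B x) {x : X}
    (hx : g (T x) < g x) : x ∈ A := by
  by_contra hxA
  classical
  have := hg x
  simp only [ind, Set.indicator_apply, hxA] at this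
  split_ifs at this <;> omega

theorem apply_lt_of_sub_eq_ind (hg : ∀ x, g x - g (T x) = ind A x - ind B x) (hAB : Disjoint A B)
    {x : X} (hx : x ∈ A) : g (T x) < g x := by
  have := hg x
  rw [ind, ind, indicator_of_mem hx, indicator_of_notMem (disjoint_left.1 hAB hx)] at this
  omega

theorem IsMatchTime.mem (hg : ∀ x, g x - g (T x) = ind A x - ind B x) {x : X} {n : ℕ}
    (h : IsMatchTime T g x n) : x ∈ A :=
  mem_of_apply_lt_of_sub_eq_ind hg (by simpa using h.2.1 1 one_pos h.1)

/-- Recurrence forces the depth to come back to its value at `x`; the first time it does so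
is a match time, since the depth moves by at most one per step. -/
theorem exists_isMatchTime [TopologicalSpace X] (hg : ∀ x, g x - g (T x) = ind A x - ind B x)
    (hAB : Disjoint A B) (hgc : Continuous g) {x : X}
    (hrec : x ∈ closure (range fun n : ℕ => T^[n + 1] x)) (hx : x ∈ A) :
    ∃ n, IsMatchTime T g x n := by
  have hreturn : ∃ n, g x ≤ g (T^[n + 1] x) := by
    by_contra! hbelow
    have hclosed : IsClosed {y | g y < g x} := (isClosed_discrete (Iio (g x))).preimage hgc
    have := closure_minimal (t := {y | g y < g x}) (range_subset_iff.2 hbelow) hclosed hrec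
    exact lt_irrefl (g x) this
  classical
  set N := Nat.find hreturn
  have hbelow : ∀ k, 0 < k → k ≤ N → g (T^[k] x) < g x := by
    intro k hk hkN
    have := Nat.find_min hreturn (show k - 1 < N by omega)
    rwa [Nat.sub_add_cancel hk, not_le] at this
  have hN : 0 < N := Nat.pos_of_ne_zero fun hN0 =>
    (apply_lt_of_sub_eq_ind hg hAB hx).not_ge (by simpa using (Nat.find_eq_zero hreturn).1 hN0)
  refine ⟨N, hN, hbelow, le_antisymm ?_ (Nat.find_spec hreturn)⟩
  have := apply_le_add_one_of_sub_eq_ind hg (T^[N] x)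
  rw [← iterate_succ_apply' T N x] at this
  linarith [hbelow N hN le_rfl]

end Cocycle

theorem eventually_isMatchTime [TopologicalSpace X] {T : X → X} {g : X → ℤ} (hT : Continuous T)
    (hgc : Continuous g) {x : X} {n : ℕ} (h : IsMatchTime T g x n) :
    ∀ᶠ y in 𝓝 x, IsMatchTime T g y n := by
  have hconst : ∀ᶠ y in 𝓝 x, ∀ k ∈ Finset.range (n + 2), g (T^[k] y) = g (T^[k] x) :=
    (Filter.eventually_all_finset _).2 fun k _ =>
      ((IsLocallyConstant.iff_continuous _).2 (hgc.comp (hT.iterate k))).eventually_eq x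
  filter_upwards [hconst] with y hy
  have hy0 : g y = g x := by simpa using hy 0 (by simp)
  refine ⟨h.1, fun k hk hkn => ?_, ?_⟩
  · rw [hy k (Finset.mem_range.2 (by omega)), hy0]
    exact h.2.1 k hk hkn
  · rw [hy (n + 1) (Finset.mem_range.2 (by omega)), hy0]
    exact h.2.2

theorem exists_continuous_isMatchTime [TopologicalSpace X] [CompactSpace X] {T : X ≃ₜ X}
    (hmin : IsMinimal T) {g : X → ℤ} (hgc : Continuous g) {A B : Set X} (hAB : Disjoint A B)
    (hg : ∀ x, g x - g (T x) = ind A x - ind B x) :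
    ∃ p : A → ℕ, Continuous p ∧ ∀ a : A, IsMatchTime T g a (p a) := by
  choose p hp using fun a : A =>
    exists_isMatchTime hg hAB hgc (hmin.mem_closure_range_iterate_succ a) a.2
  refine ⟨p, ((IsLocallyConstant.iff_eventually_eq p).2 fun a => ?_).continuous, hp⟩
  filter_upwards [continuous_subtype_val.continuousAt.eventually
    (eventually_isMatchTime T.continuous hgc (hp a))] with b hb
  exact (hp b).unique hb

variable [TopologicalSpace X] {T : X ≃ₜ X} {g : X → ℤ}

/-- Run backwards, the orbit reads the same brackets in reverse: `B` now opens and `A` closes.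
The depth is shifted by one step (`g ∘ T`) so that it is read just after each bracket. -/
theorem sub_eq_ind_symm {A B : Set X} (hg : ∀ x, g x - g (T x) = ind A x - ind B x) (y : X) :
    (g ∘ T) y - (g ∘ T) (T.symm y) = ind B y - ind A y := by
  simp only [comp_apply, Homeomorph.apply_symm_apply]
  linarith [hg y]

theorem isMatchTime_symm_iff {x : X} {n : ℕ} :
    IsMatchTime T.symm (g ∘ T) (T^[n] x) n ↔ IsMatchTime T g x n := by
  have hk : ∀ k ≤ n, (g ∘ T) (T.symm^[k] (T^[n] x)) = g (T^[n - k + 1] x) := fun k hk => by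
    rw [T.iterate_symm_iterate_of_le hk, comp_apply, ← iterate_succ_apply' T]
  have htop : (g ∘ T) (T^[n] x) = g (T^[n + 1] x) := by simpa using hk 0 n.zero_le
  have hlast : (g ∘ T) (T.symm^[n + 1] (T^[n] x)) = g x := by
    rw [iterate_succ_apply', LeftInverse.iterate T.symm_apply_apply, comp_apply,
      T.apply_symm_apply]
  rw [IsMatchTime, IsMatchTime, htop, hlast]
  constructor
  · rintro ⟨hn, hlt, heq⟩
    refine ⟨hn, fun j hj hjn => ?_, heq.symm⟩
    have := hlt (n + 1 - j) (by omega) (by omega)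
    rwa [hk _ (by omega), show n - (n + 1 - j) + 1 = j by omega, ← heq] at this
  · rintro ⟨hn, hlt, heq⟩
    refine ⟨hn, fun k _ hkn => ?_, heq.symm⟩
    rw [hk k hkn, heq]
    exact hlt _ (by omega) (by omega)

theorem IsMatchTime.of_symm {y : X} {n : ℕ} (h : IsMatchTime T.symm (g ∘ T) y n) :
    IsMatchTime T g (T.symm^[n] y) n := by
  rw [← isMatchTime_symm_iff, LeftInverse.iterate T.apply_symm_apply]
  exact h

theorem exists_homeomorph_eq_iterate {A B : Set X} (hg : ∀ x, g x - g (T x) = ind A x - ind B x)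
    {p : A → ℕ} {q : B → ℕ} (hpc : Continuous p) (hqc : Continuous q)
    (hp : ∀ a : A, IsMatchTime T g a (p a))
    (hq : ∀ b : B, IsMatchTime T.symm (g ∘ T) b (q b)) :
    ∃ e : A ≃ₜ B, ∀ a : A, (e a : X) = T^[p a] a := by
  have hp' : ∀ a : A, IsMatchTime T.symm (g ∘ T) (T^[p a] a) (p a) :=
    fun a => isMatchTime_symm_iff.2 (hp a)
  have hq' : ∀ b : B, IsMatchTime T g (T.symm^[q b] b) (q b) := fun b => (hq b).of_symm
  let e : A ≃ B :=
    { toFun a := ⟨T^[p a] a, (hp' a).mem (sub_eq_ind_symm hg)⟩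
      invFun b := ⟨T.symm^[q b] b, (hq' b).mem hg⟩
      left_inv a := by
        ext
        dsimp only
        rw [(hq _).unique (hp' a), LeftInverse.iterate T.symm_apply_apply]
      right_inv b := by
        ext
        dsimp only
        rw [(hp _).unique (hq' b), LeftInverse.iterate T.apply_symm_apply] }
  refine ⟨⟨e, ?_, ?_⟩, fun a => rfl⟩
  · exact (continuous_iterate_apply T.continuous hpc continuous_subtype_val).subtype_mk _
  · exact (continuous_iterate_apply T.symm.continuous hqc continuous_subtype_val).subtype_mk _

end Matching

theorem stmt12_general {X : Type*} [MetricSpace X] [CompactSpace X]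
    (T : X ≃ₜ X) (hmin : IsMinimal T)
    (A B : Set X) (hdisj : Disjoint A B)
    (hcob : IsCob (⇑T) (fun x => ind A x - ind B x)) :
    ∃ p : A → ℕ, Continuous p ∧ (∀ x, 0 < p x) ∧
      ∃ e : A ≃ₜ B, ∀ x : A, (e x : X) = (⇑T)^[p x] (x : X) := by
  obtain ⟨g, hgc, hg⟩ := hcob
  replace hg : ∀ x, g x - g (T x) = ind A x - ind B x := fun x => (hg x).symm
  obtain ⟨p, hpc, hp⟩ := exists_continuous_isMatchTime hmin hgc hdisj hg
  obtain ⟨q, hqc, hq⟩ := exists_continuous_isMatchTime hmin.symm (hgc.comp T.continuous)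
    hdisj.symm (sub_eq_ind_symm hg)
  exact ⟨p, hpc, fun a => (hp a).1, exists_homeomorph_eq_iterate hg hpc hqc hp hq⟩

theorem stmt12 {X : Type*} [MetricSpace X] [CompactSpace X] [PerfectSpace X]
    [TotallyDisconnectedSpace X]
    (T : X ≃ₜ X) (hmin : IsMinimal T)
    (A B : Set X) (hA : IsClopen A) (hB : IsClopen B)
    (hAne : A.Nonempty) (hBne : B.Nonempty) (hdisj : Disjoint A B)
    (hcob : IsCob (⇑T) (fun x => ind A x - ind B x)) :
    ∃ p : A → ℕ, Continuous p ∧ (∀ x, 0 < p x) ∧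
      ∃ e : A ≃ₜ B, ∀ x : A, (e x : X) = (⇑T)^[p x] (x : X) :=
  stmt12_general T hmin A B hdisj hcob
end

section
/- Suppose α and β are irrational real numbers that are not rationally related. Let G₁ = {(aα + b, aα + cβ + d) ∈ ℝ² : a,b,c,d ∈ ℤ} with the strict coordinatewise ordering (positive cone {(x,y) : x>0 and y>0} ∪ {(0,0)}), let φ : G₁ → ℝ be projection onto the second coordinate, and let G₃ = φ(G₁) with the usual ordering on ℝ. Fix c,d ∈ ℤ with 0 < cβ + d < 1, and set h = cβ + d ∈ G₃ and g = (1,1) ∈ G₁. Then 0 < h < φ(g), but there is no g' ∈ G₁ with φ(g') = h and (0,0) < g' < (1,1). In particular, φ is an order epimorphism that is not exhaustive. -/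
open Set Filter Topology MeasureTheory

/-- Membership in the group `G₁ = {(aα+b, aα+cβ+d) : a,b,c,d ∈ ℤ} ⊆ ℝ²`. -/
def memG1 (α β : ℝ) (v : ℝ × ℝ) : Prop :=
  ∃ a b c d : ℤ, v = ((a : ℝ) * α + b, (a : ℝ) * α + (c : ℝ) * β + d)

theorem LinearIndependent.int_coeffs_eq_zero_three {x y z : ℝ}
    (h : LinearIndependent ℚ ![x, y, z]) {p q r : ℤ}
    (hs : (p : ℝ) * x + q * y + r * z = 0) : p = 0 ∧ q = 0 ∧ r = 0 := by
  rw [Fintype.linearIndependent_iff] at h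
  have hzero := h ![(p : ℚ), q, r] (by simpa [Fin.sum_univ_three, Rat.smul_def] using hs)
  exact ⟨by simpa using hzero 0, by simpa using hzero 1, by simpa using hzero 2⟩

theorem stmt17_general (α β : ℝ)
    (hind : LinearIndependent ℚ ![(1 : ℝ), α, β])
    (c d : ℤ) (hpos : 0 < (c : ℝ) * β + d) (hlt1 : (c : ℝ) * β + d < 1) :
    (0 < (c : ℝ) * β + d ∧ (c : ℝ) * β + d < ((1 : ℝ), (1 : ℝ)).2) ∧
    ¬ ∃ g' : ℝ × ℝ, memG1 α β g' ∧ g'.2 = (c : ℝ) * β + d ∧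
        (0 < g'.1 ∧ 0 < g'.2) ∧ (g'.1 < 1 ∧ g'.2 < 1) := by
  refine ⟨⟨hpos, hlt1⟩, ?_⟩
  rintro ⟨_, ⟨a, b, c', d', rfl⟩, hsnd, ⟨hfst_pos, -⟩, hfst_lt, -⟩
  -- The second coordinate pins down `a = 0`, so the first coordinate is an integer in `(0, 1)`.
  obtain ⟨-, rfl, -⟩ := hind.int_coeffs_eq_zero_three
    (p := d' - d) (q := a) (r := c' - c) (by push_cast at hsnd ⊢; linarith)
  have hb_pos : 0 < b := by exact_mod_cast (by simpa using hfst_pos : (0 : ℝ) < b)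
  have hb_lt : b < 1 := by exact_mod_cast (by simpa using hfst_lt : (b : ℝ) < 1)
  omega

theorem stmt17 (α β : ℝ) (hα : Irrational α) (hβ : Irrational β)
    (hind : LinearIndependent ℚ ![(1 : ℝ), α, β])
    (c d : ℤ) (hpos : 0 < (c : ℝ) * β + d) (hlt1 : (c : ℝ) * β + d < 1) :
    (0 < (c : ℝ) * β + d ∧ (c : ℝ) * β + d < ((1 : ℝ), (1 : ℝ)).2) ∧
    ¬ ∃ g' : ℝ × ℝ, memG1 α β g' ∧ g'.2 = (c : ℝ) * β + d ∧
        (0 < g'.1 ∧ 0 < g'.2) ∧ (g'.1 < 1 ∧ g'.2 < 1) :=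
  stmt17_general α β hind c d hpos hlt1
end
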